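/- arXiv:cond-mat/9704018 — 10 statements merged into one kernel-verified Lean document; each statement's English description precedes it below -/
import Mathlib

section
/- For all x, y ∈ ℝ² one has τ̂(x) + τ̂(y) − τ̂(x+y) ≥ Δ·(‖x‖ + ‖y‖ − ‖x+y‖), where Δ := inf_θ (f''(θ) + f(θ)). -/
/-!
Write `G := τ̂ - Δ‖·‖` and `g := f - Δ`, so that `g'' + g ≥ 0` and `G(r(cos α, sin α)) = r g(α)`.
For `|ψ - φ| ≤ π`, the function `W θ = g θ cos (ψ - θ) + g' θ sin (ψ - θ)` has derivative
`(g'' + g)(θ) sin (ψ - θ)`, whose sign between `φ` and `ψ` is that of `ψ - φ`; comparing `W φ`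
with `W ψ = g ψ` gives `g φ cos (ψ - φ) + g' φ sin (ψ - φ) ≤ g ψ`, and by periodicity for all `ψ`.
In the plane this says that the linear form with coefficients `g φ, g' φ` in the frame
`(cos φ, sin φ), (-sin φ, cos φ)` lies below `G` and touches it in the direction `φ`.
Choosing `φ` as the direction of `x + y` makes `G` subadditive, which is the claim.
-/

open scoped RealInnerProductSpace
open Real Function

theorem mul_cos_sub_add_deriv_mul_sin_sub_le {g : ℝ → ℝ} (hg : ContDiff ℝ 2 g)
    (h : ∀ θ, 0 ≤ deriv (deriv g) θ + g θ) {φ ψ : ℝ} (hφψ : |ψ - φ| ≤ π) :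
    g φ * cos (ψ - φ) + deriv g φ * sin (ψ - φ) ≤ g ψ := by
  have hg' : ContDiff ℝ 1 (deriv g) := hg.iterate_deriv' 1 1
  set W : ℝ → ℝ := fun θ => g θ * cos (ψ - θ) + deriv g θ * sin (ψ - θ)
  have hW : ∀ θ, HasDerivAt W ((deriv (deriv g) θ + g θ) * sin (ψ - θ)) θ := by
    intro θ
    have hsub := (hasDerivAt_id' θ).const_sub ψ
    exact (((hg.differentiable two_ne_zero θ).hasDerivAt.fun_mul hsub.cos).fun_add
      ((hg'.differentiable one_ne_zero θ).hasDerivAt.fun_mul hsub.sin)).congr_deriv (by ring)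
  have hWψ : W ψ = g ψ := by simp [W]
  rw [← hWψ]
  rcases le_total φ ψ with hle | hle
  · refine monotoneOn_of_hasDerivWithinAt_nonneg (convex_Icc φ ψ)
      (fun θ _ => (hW θ).continuousAt.continuousWithinAt)
      (fun θ _ => (hW θ).hasDerivWithinAt) (fun θ hθ => ?_)
      (Set.left_mem_Icc.2 hle) (Set.right_mem_Icc.2 hle) hle
    rw [interior_Icc] at hθ
    exact mul_nonneg (h θ) (sin_nonneg_of_nonneg_of_le_pi (by linarith [hθ.2])
      (by linarith [hθ.1, le_abs_self (ψ - φ)]))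
  · refine antitoneOn_of_hasDerivWithinAt_nonpos (convex_Icc ψ φ)
      (fun θ _ => (hW θ).continuousAt.continuousWithinAt)
      (fun θ _ => (hW θ).hasDerivWithinAt) (fun θ hθ => ?_)
      (Set.left_mem_Icc.2 hle) (Set.right_mem_Icc.2 hle) hle
    rw [interior_Icc] at hθ
    exact mul_nonpos_of_nonneg_of_nonpos (h θ) (sin_nonpos_of_nonpos_of_neg_pi_le
      (by linarith [hθ.1]) (by linarith [hθ.2, neg_abs_le (ψ - φ)]))

theorem Function.Periodic.deriv {g : ℝ → ℝ} {c : ℝ} (hg : Periodic g c) : Periodic (deriv g) c :=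
  fun θ => by rw [← deriv_comp_add_const, funext hg]

theorem mul_cos_sub_add_deriv_mul_sin_sub_le_of_periodic {g : ℝ → ℝ}
    (hper : Periodic g (2 * π)) (hg : ContDiff ℝ 2 g) (h : ∀ θ, 0 ≤ deriv (deriv g) θ + g θ)
    (φ ψ : ℝ) : g φ * cos (ψ - φ) + deriv g φ * sin (ψ - φ) ≤ g ψ := by
  set ψ' := toIocMod two_pi_pos (φ - π) ψ
  set n := toIocDiv two_pi_pos (φ - π) ψ
  have hψ : ψ = ψ' + n • (2 * π) := (toIocMod_add_toIocDiv_zsmul _ _ _).symm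
  have hψ' : |ψ' - φ| ≤ π := by
    have := toIocMod_mem_Ioc two_pi_pos (φ - π) ψ
    rw [abs_le]
    constructor <;> linarith [this.1, this.2]
  have hsub : ψ - φ = ψ' - φ + n • (2 * π) := by rw [hψ]; ring
  rw [hsub, cos_periodic.zsmul n, sin_periodic.zsmul n, hψ, hper.zsmul n]
  exact mul_cos_sub_add_deriv_mul_sin_sub_le hg h hψ'

theorem EuclideanSpace.exists_eq_norm_smul_cos_sin (v : EuclideanSpace ℝ (Fin 2)) :
    ∃ α, v = ‖v‖ • !₂[cos α, sin α] := by
  set z := Complex.orthonormalBasisOneI.repr.symm v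
  have hz : ‖z‖ = ‖v‖ := LinearIsometryEquiv.norm_map _ _
  refine ⟨z.arg, ?_⟩
  rw [← hz]
  ext i
  fin_cases i <;> simp [z, Complex.norm_mul_cos_arg, Complex.norm_mul_sin_arg]

theorem map_add_le_add_of_deriv_deriv_add_nonneg {G : EuclideanSpace ℝ (Fin 2) → ℝ}
    {g : ℝ → ℝ} (hG : ∀ r, 0 ≤ r → ∀ α, G (r • !₂[cos α, sin α]) = r * g α)
    (hg : ContDiff ℝ 2 g) (h : ∀ θ, 0 ≤ deriv (deriv g) θ + g θ)
    (x y : EuclideanSpace ℝ (Fin 2)) : G (x + y) ≤ G x + G y := by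
  have hper : Periodic g (2 * π) := fun α => by
    have := hG 1 zero_le_one (α + 2 * π)
    rw [cos_add_two_pi, sin_add_two_pi, hG 1 zero_le_one α] at this
    linarith
  obtain ⟨φ, hφ⟩ := EuclideanSpace.exists_eq_norm_smul_cos_sin (x + y)
  set w : EuclideanSpace ℝ (Fin 2) := g φ • !₂[cos φ, sin φ] + deriv g φ • !₂[-sin φ, cos φ]
  have hw : ∀ r α, ⟪w, r • !₂[cos α, sin α]⟫ =
      r * (g φ * cos (α - φ) + deriv g φ * sin (α - φ)) := by
    intro r α
    rw [inner_smul_right, inner_add_left, real_inner_smul_left, real_inner_smul_left]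
    simp only [PiLp.inner_apply, Fin.sum_univ_two, RCLike.inner_apply, conj_trivial,
      Matrix.cons_val_zero, Matrix.cons_val_one, cos_sub, sin_sub]
    ring
  have hw_le : ∀ v, ⟪w, v⟫ ≤ G v := by
    intro v
    obtain ⟨α, hα⟩ := EuclideanSpace.exists_eq_norm_smul_cos_sin v
    rw [hα, hw, hG _ (norm_nonneg v)]
    exact mul_le_mul_of_nonneg_left
      (mul_cos_sub_add_deriv_mul_sin_sub_le_of_periodic hper hg h φ α) (norm_nonneg v)
  calc G (x + y) = ⟪w, x + y⟫ := by rw [hφ, hw, hG _ (norm_nonneg _)]; simp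
    _ = ⟪w, x⟫ + ⟪w, y⟫ := inner_add_right _ _ _
    _ ≤ G x + G y := add_le_add (hw_le x) (hw_le y)

theorem sharp_triangle_inequality_of_positive_stiffness_general
    (τ : EuclideanSpace ℝ (Fin 2) → ℝ)
    (hhom : ∀ c : ℝ, 0 ≤ c → ∀ x, τ (c • x) = c * τ x)
    (f : ℝ → ℝ)
    (hf : ∀ θ : ℝ, f θ = τ (WithLp.toLp 2 ![Real.cos θ, Real.sin θ] : EuclideanSpace ℝ (Fin 2)))
    (hsmooth : ContDiff ℝ 2 f)
    (Δ : ℝ)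
    (hΔ : Δ = ⨅ θ : ℝ, (deriv (deriv f) θ + f θ)) :
    ∀ x y : EuclideanSpace ℝ (Fin 2),
      τ x + τ y - τ (x + y) ≥ Δ * (‖x‖ + ‖y‖ - ‖x + y‖) := by
  have hper : Periodic f (2 * π) := fun θ => by simp only [hf, cos_add_two_pi, sin_add_two_pi]
  have hΔ_le : ∀ θ, Δ ≤ deriv (deriv f) θ + f θ := by
    have hbdd : BddBelow (Set.range fun θ => deriv (deriv f) θ + f θ) :=
      ((hper.deriv.deriv.add hper).compact_of_continuous two_pi_pos.ne'
        ((hsmooth.iterate_deriv' 0 2).continuous.add hsmooth.continuous)).bddBelow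
    exact fun θ => hΔ ▸ ciInf_le hbdd θ
  have hunit : ∀ α, ‖!₂[cos α, sin α]‖ = 1 := fun α => by simp [EuclideanSpace.norm_eq]
  intro x y
  have key := map_add_le_add_of_deriv_deriv_add_nonneg (G := fun v => τ v - Δ * ‖v‖)
    (g := fun θ => f θ - Δ)
    (fun r hr α => by simp [hhom r hr, ← hf, norm_smul, hunit, abs_of_nonneg hr]; ring)
    (hsmooth.sub contDiff_const) (fun θ => by simp only [deriv_sub_const_fun]; linarith [hΔ_le θ]) x y
  linarith

/-- Positive stiffness implies the sharp triangle inequality with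
constant `Δ = inf_θ (f''(θ) + f(θ))`. -/
theorem sharp_triangle_inequality_of_positive_stiffness
    (τ : EuclideanSpace ℝ (Fin 2) → ℝ)
    (hhom : ∀ c : ℝ, 0 ≤ c → ∀ x, τ (c • x) = c * τ x)
    (hpos : ∀ x : EuclideanSpace ℝ (Fin 2), x ≠ 0 → 0 < τ x)
    (f : ℝ → ℝ)
    (hf : ∀ θ : ℝ, f θ = τ (WithLp.toLp 2 ![Real.cos θ, Real.sin θ] : EuclideanSpace ℝ (Fin 2)))
    (hsmooth : ContDiff ℝ 2 f)
    (Δ : ℝ)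
    (hΔ : Δ = ⨅ θ : ℝ, (deriv (deriv f) θ + f θ))
    (hΔpos : 0 < Δ) :
    ∀ x y : EuclideanSpace ℝ (Fin 2),
      τ x + τ y - τ (x + y) ≥ Δ * (‖x‖ + ‖y‖ - ‖x + y‖) :=
  sharp_triangle_inequality_of_positive_stiffness_general τ hhom f hf hsmooth Δ hΔ
end

section
/- If K > 0 is such that τ̂(x) + τ̂(y) − τ̂(x+y) ≥ K·(‖x‖ + ‖y‖ − ‖x+y‖) for all x, y ∈ ℝ², then f''(θ) + f(θ) ≥ K for every θ; hence the stiffness constant inf_θ (f''(θ) + f(θ)) is the best constant in the sharp triangle inequality. -/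
/-!
The unit vectors at angles `θ + h` and `θ - h` add up to `2 cos h` times the unit vector at
angle `θ`, so for `|h|` small (where `cos h ≥ 0`) homogeneity turns the sharp triangle inequality
into `F (θ + h) + F (θ - h) ≥ 2 cos h · F θ` with `F = f - K`. Hence
`h ↦ F (θ + h) + F (θ - h) - 2 cos h · F θ` has a local minimum `0` at `h = 0`, and its second
derivative there, `2 (F'' θ + F θ)`, is nonnegative.
-/

open Real Filter Topology

theorem IsLocalMin.deriv_deriv_nonneg {g : ℝ → ℝ} {x₀ : ℝ} (hmin : IsLocalMin g x₀)
    (hc : ContinuousAt g x₀) : 0 ≤ deriv (deriv g) x₀ := by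
  by_contra! hneg
  -- The second-derivative test would make `x₀` a local maximum too, so `g` is locally constant.
  have hmax : IsLocalMax g x₀ := isLocalMax_of_deriv_deriv_neg hneg hmin.deriv_eq_zero hc
  have hconst : g =ᶠ[𝓝 x₀] fun _ ↦ g x₀ := by
    filter_upwards [hmin, hmax] with x hx₁ hx₂ using le_antisymm hx₂ hx₁
  simp [hconst.deriv.deriv_eq] at hneg

theorem deriv_deriv_cos_second_difference {F : ℝ → ℝ} (hF : ContDiff ℝ 2 F) (θ : ℝ) :
    deriv (deriv fun h ↦ F (θ + h) + F (θ - h) - 2 * cos h * F θ) 0 =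
      2 * (deriv (deriv F) θ + F θ) := by
  have hF₁ : Differentiable ℝ F := hF.differentiable (by norm_num)
  have hF₂ : Differentiable ℝ (deriv F) := (hF.deriv' (n := 1)).differentiable (by norm_num)
  have hderiv : ∀ h, HasDerivAt (fun h ↦ F (θ + h) + F (θ - h) - 2 * cos h * F θ)
      (deriv F (θ + h) - deriv F (θ - h) + 2 * sin h * F θ) h := fun h ↦
    ((((hF₁ _).hasDerivAt.comp_const_add θ h).fun_add
      ((hF₁ _).hasDerivAt.comp_const_sub θ h)).fun_sub
      (((hasDerivAt_cos h).const_mul 2).mul_const (F θ))).congr_deriv (by ring)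
  have hderiv2 : HasDerivAt (fun h ↦ deriv F (θ + h) - deriv F (θ - h) + 2 * sin h * F θ)
      (2 * (deriv (deriv F) θ + F θ)) 0 :=
    ((((hF₂ _).hasDerivAt.comp_const_add θ 0).fun_sub
      ((hF₂ _).hasDerivAt.comp_const_sub θ 0)).fun_add
      (((hasDerivAt_sin 0).const_mul 2).mul_const (F θ))).congr_deriv
        (by simp only [add_zero, sub_zero, sub_neg_eq_add, cos_zero, mul_one]; ring)
  rw [funext fun h ↦ (hderiv h).deriv, hderiv2.deriv]

theorem deriv_deriv_add_self_nonneg_of_cos_second_difference {F : ℝ → ℝ}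
    (hF : ContDiff ℝ 2 F) {θ : ℝ}
    (hdiff : ∀ᶠ h in 𝓝 0, 2 * cos h * F θ ≤ F (θ + h) + F (θ - h)) :
    0 ≤ deriv (deriv F) θ + F θ := by
  have hmin : IsLocalMin (fun h ↦ F (θ + h) + F (θ - h) - 2 * cos h * F θ) 0 := by
    filter_upwards [hdiff] with x hx
    simp only [add_zero, sub_zero, cos_zero]
    linarith
  have hcont := hF.continuous
  have := hmin.deriv_deriv_nonneg (by fun_prop)
  rw [deriv_deriv_cos_second_difference hF] at this
  linarith

noncomputable def unitVec (θ : ℝ) : EuclideanSpace ℝ (Fin 2) := WithLp.toLp 2 ![cos θ, sin θ]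

theorem norm_unitVec (θ : ℝ) : ‖unitVec θ‖ = 1 := by
  simp [unitVec, EuclideanSpace.norm_eq, Fin.sum_univ_two]

theorem unitVec_add_add_unitVec_sub (θ h : ℝ) :
    unitVec (θ + h) + unitVec (θ - h) = (2 * cos h) • unitVec θ := by
  ext i
  fin_cases i <;> simp [unitVec, cos_add, cos_sub, sin_add, sin_sub] <;> ring

theorem cos_second_difference_le_of_sharp_triangle {τ : EuclideanSpace ℝ (Fin 2) → ℝ}
    (hhom : ∀ c : ℝ, 0 ≤ c → ∀ x, τ (c • x) = c * τ x) {K : ℝ}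
    (hSTI : ∀ x y, τ x + τ y - τ (x + y) ≥ K * (‖x‖ + ‖y‖ - ‖x + y‖)) {θ h : ℝ}
    (hh : 0 ≤ cos h) :
    2 * cos h * (τ (unitVec θ) - K) ≤ τ (unitVec (θ + h)) - K + (τ (unitVec (θ - h)) - K) := by
  have h2c : 0 ≤ 2 * cos h := by positivity
  have := hSTI (unitVec (θ + h)) (unitVec (θ - h))
  rw [unitVec_add_add_unitVec_sub, hhom _ h2c, norm_smul, norm_unitVec, norm_unitVec,
    norm_unitVec, Real.norm_of_nonneg h2c] at this
  linarith

theorem stiffness_ge_of_sharp_triangle_inequality_general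
    (τ : EuclideanSpace ℝ (Fin 2) → ℝ)
    (hhom : ∀ c : ℝ, 0 ≤ c → ∀ x, τ (c • x) = c * τ x)
    (f : ℝ → ℝ)
    (hf : ∀ θ : ℝ, f θ = τ (WithLp.toLp 2 ![Real.cos θ, Real.sin θ] : EuclideanSpace ℝ (Fin 2)))
    (hsmooth : ContDiff ℝ 2 f)
    (K : ℝ)
    (hSTI : ∀ x y : EuclideanSpace ℝ (Fin 2),
      τ x + τ y - τ (x + y) ≥ K * (‖x‖ + ‖y‖ - ‖x + y‖)) :
    ∀ θ : ℝ, deriv (deriv f) θ + f θ ≥ K := by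
  intro θ
  have hcos : ∀ᶠ h in 𝓝 0, 0 ≤ cos h :=
    (continuous_cos.tendsto 0).eventually (eventually_ge_nhds (by simp))
  have hτ : f = fun t ↦ τ (unitVec t) := funext hf
  have := deriv_deriv_add_self_nonneg_of_cos_second_difference (F := fun t ↦ f t - K) (θ := θ)
    (hsmooth.sub contDiff_const) (hcos.mono fun h hh ↦ by
      simpa only [hτ] using cos_second_difference_le_of_sharp_triangle hhom hSTI hh)
  simp only [deriv_sub_const_fun] at this
  linarith

/-- If the sharp triangle inequality holds with constant `K > 0`, then
`f''(θ) + f(θ) ≥ K` for every `θ`; hence the stiffness constant is the best constant. -/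
theorem stiffness_ge_of_sharp_triangle_inequality
    (τ : EuclideanSpace ℝ (Fin 2) → ℝ)
    (hhom : ∀ c : ℝ, 0 ≤ c → ∀ x, τ (c • x) = c * τ x)
    (hpos : ∀ x : EuclideanSpace ℝ (Fin 2), x ≠ 0 → 0 < τ x)
    (f : ℝ → ℝ)
    (hf : ∀ θ : ℝ, f θ = τ (WithLp.toLp 2 ![Real.cos θ, Real.sin θ] : EuclideanSpace ℝ (Fin 2)))
    (hsmooth : ContDiff ℝ 2 f)
    (K : ℝ) (hK : 0 < K)
    (hSTI : ∀ x y : EuclideanSpace ℝ (Fin 2),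
      τ x + τ y - τ (x + y) ≥ K * (‖x‖ + ‖y‖ - ‖x + y‖)) :
    ∀ θ : ℝ, deriv (deriv f) θ + f θ ≥ K :=
  stiffness_ge_of_sharp_triangle_inequality_general τ hhom f hf hsmooth K hSTI
end

section
/- If there exists K₁ > 0 such that for all unit vectors x̂, ŷ and all points x*, y* ∈ W with ⟨x*, x̂⟩ = τ̂(x̂) and ⟨y*, ŷ⟩ = τ̂(ŷ) one has ⟨x* − y*, x̂⟩ ≥ K₁·‖x̂ − ŷ‖², then there exists K₀ > 0 such that W has lower radius of curvature at least K₀ at every boundary point. -/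
open scoped RealInnerProductSpace

private lemma limit_aux (a b : ℝ) (h : ∀ n : ℕ, (1 - 1/(n+1)) * a < b) : a ≤ b := by
  have ht : Filter.Tendsto (fun n : ℕ => (1 - 1/(n+1 : ℝ)) * a) Filter.atTop
      (nhds ((1 - 0) * a)) :=
    (Filter.Tendsto.sub tendsto_const_nhds tendsto_one_div_add_atTop_nhds_zero_nat).mul
      tendsto_const_nhds
  have := le_of_tendsto ht (Filter.Eventually.of_forall fun n => (h n).le)
  simpa using this

/-- The quadratic inequality `⟨x* − y*, x̂⟩ ≥ K₁·‖x̂ − ŷ‖²` for points of `W`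
in duality with unit vectors implies a uniform positive lower bound on the lower radius of
curvature of the boundary of `W`. -/
theorem lower_curvature_of_quadratic_duality_bound
    (W : Set (EuclideanSpace ℝ (Fin 2)))
    (hWcompact : IsCompact W) (hWconvex : Convex ℝ W)
    (hW0 : (0 : EuclideanSpace ℝ (Fin 2)) ∈ interior W)
    (τ : EuclideanSpace ℝ (Fin 2) → ℝ)
    (hτ : ∀ x, τ x = sSup ((fun y => ⟪y, x⟫) '' W))
    (hquad : ∃ K₁ > (0 : ℝ), ∀ xh yh : EuclideanSpace ℝ (Fin 2), ‖xh‖ = 1 → ‖yh‖ = 1 →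
      ∀ xs ∈ W, ∀ ys ∈ W, ⟪xs, xh⟫ = τ xh → ⟪ys, yh⟫ = τ yh →
        ⟪xs - ys, xh⟫ ≥ K₁ * ‖xh - yh‖ ^ 2) :
    ∃ K₀ > (0 : ℝ), ∀ xs ∈ frontier W, ∀ ρ : ℝ, 0 < ρ → ρ < K₀ →
      ∃ U : Set (EuclideanSpace ℝ (Fin 2)), IsOpen U ∧ xs ∈ U ∧
        ∃ c : EuclideanSpace ℝ (Fin 2), ‖xs - c‖ = ρ ∧
          Metric.closedBall c ρ ∩ U ⊆ W := by
  obtain ⟨K₁, hK₁, hq⟩ := hquad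
  have hWclosed : IsClosed W := hWcompact.isClosed
  have h0W : (0 : EuclideanSpace ℝ (Fin 2)) ∈ W := interior_subset hW0
  -- a general tool: any point of W yields ≤ bound for a functional bounding interior
  have hbound : ∀ (f : EuclideanSpace ℝ (Fin 2) →L[ℝ] ℝ) (b : ℝ),
      (∀ a ∈ interior W, f a < b) → ∀ y ∈ W, f y ≤ b := by
    intro f b hf y hy
    refine limit_aux (f y) b fun n => ?_
    have h1 : (0:ℝ) < 1/(n+1) := by positivity
    have h2 : (1 - 1/(n+1) : ℝ) + 1/(n+1) = 1 := by ring
    have h3 : (0:ℝ) ≤ 1 - 1/(n+1) := by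
      have : (1:ℝ)/(n+1) ≤ 1 := by
        rw [div_le_one (by positivity)]; linarith [Nat.cast_nonneg (α := ℝ) n]
      linarith
    have hm := hWconvex.combo_self_interior_mem_interior hy hW0 h3 h1 h2
    have := hf _ hm
    simpa [map_smul] using this
  -- the support function value via maxima
  have hmax : ∀ yh : EuclideanSpace ℝ (Fin 2), ∃ ys ∈ W, (⟪ys, yh⟫ = τ yh ∧
      ∀ a ∈ W, ⟪a, yh⟫ ≤ ⟪ys, yh⟫) := by
    intro yh
    obtain ⟨ys, hysW, hys⟩ := hWcompact.exists_isMaxOn ⟨0, h0W⟩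
      (Continuous.continuousOn ((continuous_id.inner continuous_const : Continuous fun a : EuclideanSpace ℝ (Fin 2) => ⟪a, yh⟫)))
    refine ⟨ys, hysW, ?_, fun a ha => hys ha⟩
    rw [hτ]
    refine (IsGreatest.csSup_eq ⟨Set.mem_image_of_mem (fun y => ⟪y, yh⟫) hysW, ?_⟩).symm
    rintro v ⟨a, ha, rfl⟩
    exact hys ha

  refine ⟨2 * K₁, by linarith, ?_⟩
  intro xs hxs ρ hρ hρK
  refine ⟨Set.univ, isOpen_univ, Set.mem_univ _, ?_⟩
  have hxsW : xs ∈ W := by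
    have := hxs.1; rwa [hWclosed.closure_eq] at this
  have hxsnint : xs ∉ interior W := hxs.2
  obtain ⟨f, hf⟩ := geometric_hahn_banach_open_point hWconvex.interior isOpen_interior hxsnint
  set v := (InnerProductSpace.toDual ℝ (EuclideanSpace ℝ (Fin 2))).symm f with hvdef
  have hvy : ∀ y, ⟪v, y⟫ = f y := fun y => InnerProductSpace.toDual_symm_apply
  have hfxs : 0 < f xs := by simpa using hf 0 hW0
  have hvne : v ≠ 0 := by
    intro h
    have := hvy xs
    rw [h, inner_zero_left] at this
    linarith
  have hvnorm : (0:ℝ) < ‖v‖ := norm_pos_iff.2 hvne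
  set xh : EuclideanSpace ℝ (Fin 2) := ‖v‖⁻¹ • v with hxhdef
  have hxhnorm : ‖xh‖ = 1 := by
    rw [hxhdef, norm_smul, norm_inv, norm_norm, inv_mul_cancel₀ hvnorm.ne']
  have hinner_xh : ∀ y, ⟪y, xh⟫ = ‖v‖⁻¹ * f y := by
    intro y
    rw [hxhdef, real_inner_smul_right, real_inner_comm, hvy]
  -- every point of W has f a ≤ f xs
  have hWf : ∀ a ∈ W, f a ≤ f xs := hbound f (f xs) hf
  have hτxh : ⟪xs, xh⟫ = τ xh := by
    rw [hτ]
    refine (IsGreatest.csSup_eq ⟨Set.mem_image_of_mem (fun y => ⟪y, xh⟫) hxsW, ?_⟩).symm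
    rintro u ⟨a, ha, rfl⟩
    simp only
    rw [hinner_xh, hinner_xh]
    exact mul_le_mul_of_nonneg_left (hWf a ha) (by positivity)
  refine ⟨xs - ρ • xh, ?_, ?_⟩
  · simp only [sub_sub_cancel, norm_smul, hxhnorm, Real.norm_eq_abs, abs_of_pos hρ, mul_one]
  set c : EuclideanSpace ℝ (Fin 2) := xs - ρ • xh with hcdef
  rintro z ⟨hzball, -⟩
  by_contra hz
  obtain ⟨g, u, hg, hu⟩ := geometric_hahn_banach_closed_point hWconvex hWclosed hz
  set w := (InnerProductSpace.toDual ℝ (EuclideanSpace ℝ (Fin 2))).symm g with hwdef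
  have hwy : ∀ y, ⟪w, y⟫ = g y := fun y => InnerProductSpace.toDual_symm_apply
  have hgz : 0 < g z := by
    have := hg 0 h0W
    simp only [map_zero] at this
    linarith
  have hwne : w ≠ 0 := by
    intro h
    have := hwy z
    rw [h, inner_zero_left] at this
    linarith
  have hwnorm : (0:ℝ) < ‖w‖ := norm_pos_iff.2 hwne
  set yh : EuclideanSpace ℝ (Fin 2) := ‖w‖⁻¹ • w with hyhdef
  have hyhnorm : ‖yh‖ = 1 := by
    rw [hyhdef, norm_smul, norm_inv, norm_norm, inv_mul_cancel₀ hwnorm.ne']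
  have hinner_yh : ∀ y, ⟪y, yh⟫ = ‖w‖⁻¹ * g y := by
    intro y
    rw [hyhdef, real_inner_smul_right, real_inner_comm, hwy]
  obtain ⟨ys, hysW, hτyh, hysmax⟩ := hmax yh
  -- z is strictly beyond the supporting value of yh
  have hz_gt : ⟪ys, yh⟫ < ⟪z, yh⟫ := by
    rw [hinner_yh, hinner_yh]
    have := hg ys hysW
    exact mul_lt_mul_of_pos_left (by linarith) (by positivity)
  -- quadratic bound applied to the pair (yh, xh) with support points (ys, xs)
  have hqa := hq yh xh hyhnorm hxhnorm ys hysW xs hxsW hτyh hτxh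
  rw [inner_sub_left] at hqa
  -- geometry
  have hball : ‖z - c‖ ≤ ρ := by
    rw [← dist_eq_norm]
    exact Metric.mem_closedBall.mp hzball
  have h1 : ⟪z - c, yh⟫ ≤ ρ := by
    calc ⟪z - c, yh⟫ ≤ ‖z - c‖ * ‖yh‖ := real_inner_le_norm _ _
    _ ≤ ρ := by rw [hyhnorm, mul_one]; exact hball
  have hexpand : ⟪z, yh⟫ = ⟪z - c, yh⟫ + ⟪xs, yh⟫ - ρ * ⟪xh, yh⟫ := by
    rw [hcdef, inner_sub_left, inner_sub_left, real_inner_smul_left]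
    ring
  have hnormsq : ‖yh - xh‖ ^ 2 = 2 - 2 * ⟪xh, yh⟫ := by
    rw [norm_sub_sq_real, hxhnorm, hyhnorm, real_inner_comm]
    ring
  have hcs : ⟪xh, yh⟫ ≤ 1 := by
    calc ⟪xh, yh⟫ ≤ ‖xh‖ * ‖yh‖ := real_inner_le_norm _ _
    _ = 1 := by rw [hxhnorm, hyhnorm, mul_one]
  rw [hnormsq] at hqa
  nlinarith [hz_gt, hqa, h1, hexpand, hcs]
end

section
/- If K₁ > 0 is such that for all unit vectors x̂, ŷ and all points x*, y* ∈ W with ⟨x*, x̂⟩ = τ̂(x̂) and ⟨y*, ŷ⟩ = τ̂(ŷ) one has ⟨x* − y*, x̂⟩ ≥ K₁·‖x̂ − ŷ‖², then for all x, y ∈ ℝ²: τ̂(x) + τ̂(y) − τ̂(x+y) ≥ 2K₁·(‖x‖ + ‖y‖ − ‖x+y‖). -/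
set_option maxHeartbeats 800000


open scoped RealInnerProductSpace

/-- The quadratic inequality `⟨x* − y*, x̂⟩ ≥ K₁·‖x̂ − ŷ‖²` implies the sharp
triangle inequality with constant `2·K₁`. -/
theorem sharp_triangle_of_quadratic_duality_bound
    (W : Set (EuclideanSpace ℝ (Fin 2)))
    (hWcompact : IsCompact W) (hWconvex : Convex ℝ W)
    (hW0 : (0 : EuclideanSpace ℝ (Fin 2)) ∈ interior W)
    (τ : EuclideanSpace ℝ (Fin 2) → ℝ)
    (hτ : ∀ x, τ x = sSup ((fun y => ⟪y, x⟫) '' W))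
    (K₁ : ℝ) (hK₁ : 0 < K₁)
    (hquad : ∀ xh yh : EuclideanSpace ℝ (Fin 2), ‖xh‖ = 1 → ‖yh‖ = 1 →
      ∀ xs ∈ W, ∀ ys ∈ W, ⟪xs, xh⟫ = τ xh → ⟪ys, yh⟫ = τ yh →
        ⟪xs - ys, xh⟫ ≥ K₁ * ‖xh - yh‖ ^ 2) :
    ∀ x y : EuclideanSpace ℝ (Fin 2),
      τ x + τ y - τ (x + y) ≥ 2 * K₁ * (‖x‖ + ‖y‖ - ‖x + y‖) := by
  have hne : W.Nonempty := ⟨0, interior_subset hW0⟩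
  have hcont : ∀ x : EuclideanSpace ℝ (Fin 2),
      Continuous fun y : EuclideanSpace ℝ (Fin 2) => ⟪y, x⟫ :=
    fun x => continuous_id.inner continuous_const
  have hbdd : ∀ x, BddAbove ((fun y => ⟪y, x⟫) '' W) := fun x =>
    (hWcompact.image (hcont x)).bddAbove
  have hle : ∀ x, ∀ w ∈ W, ⟪w, x⟫ ≤ τ x := by
    intro x w hw
    rw [hτ]
    exact le_csSup (hbdd x) ⟨w, hw, rfl⟩
  have hex : ∀ x, ∃ z ∈ W, ⟪z, x⟫ = τ x := by
    intro x
    obtain ⟨z, hz, hmax⟩ := hWcompact.exists_isMaxOn hne (hcont x).continuousOn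
    refine ⟨z, hz, ?_⟩
    have hg : IsGreatest ((fun y => ⟪y, x⟫) '' W) ⟪z, x⟫ :=
      ⟨⟨z, hz, rfl⟩, by rintro _ ⟨w, hw, rfl⟩; exact hmax hw⟩
    rw [hτ]
    exact hg.csSup_eq.symm
  have hτ0 : τ 0 = 0 := by
    obtain ⟨z, hzW, hz⟩ := hex 0
    rw [← hz, inner_zero_right]
  have hhom : ∀ c : ℝ, 0 < c → ∀ x, τ (c • x) = c * τ x := by
    intro c hc x
    obtain ⟨z, hzW, hz⟩ := hex x
    apply le_antisymm
    · rw [hτ (c • x)]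
      apply csSup_le (hne.image _)
      rintro _ ⟨w, hw, rfl⟩
      simp only [real_inner_smul_right]
      exact mul_le_mul_of_nonneg_left (hle x w hw) hc.le
    · calc c * τ x = ⟪z, c • x⟫ := by rw [real_inner_smul_right, hz]
        _ ≤ τ (c • x) := hle _ z hzW
  intro x y
  by_cases hx : x = 0
  · simp [hx, hτ0]
  by_cases hy : y = 0
  · simp [hy, hτ0]
  have ha : (0:ℝ) < ‖x‖ := norm_pos_iff.mpr hx
  have hb : (0:ℝ) < ‖y‖ := norm_pos_iff.mpr hy
  set a := ‖x‖ with ha_def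
  set b := ‖y‖ with hb_def
  set xh : EuclideanSpace ℝ (Fin 2) := a⁻¹ • x with hxh_def
  set yh : EuclideanSpace ℝ (Fin 2) := b⁻¹ • y with hyh_def
  have hxh1 : ‖xh‖ = 1 := norm_smul_inv_norm hx
  have hyh1 : ‖yh‖ = 1 := norm_smul_inv_norm hy
  have hxs : x = a • xh := (smul_inv_smul₀ ha.ne' x).symm
  have hys : y = b • yh := (smul_inv_smul₀ hb.ne' y).symm
  obtain ⟨xs, hxsW, hxsm⟩ := hex xh
  obtain ⟨ys, hysW, hysm⟩ := hex yh
  have hτx : τ x = a * ⟪xs, xh⟫ := by rw [hxsm]; conv_lhs => rw [hxs, hhom a ha]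
  have hτy : τ y = b * ⟪ys, yh⟫ := by rw [hysm]; conv_lhs => rw [hys, hhom b hb]
  by_cases hxy : x + y = 0
  · -- y = -x, so yh = -xh
    have hyx : y = -x := eq_neg_of_add_eq_zero_right hxy
    have hba : b = a := by rw [hb_def, ha_def, hyx, norm_neg]
    have hyhx : yh = -xh := by
      rw [hyh_def, hyx, hba, hxh_def, smul_neg]
    have hq := hquad xh yh hxh1 hyh1 xs hxsW ys hysW hxsm hysm
    have hnrm : ‖xh - yh‖ ^ 2 = 4 := by
      rw [hyhx, sub_neg_eq_add, ← two_smul ℝ xh, norm_smul, hxh1]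
      norm_num
    rw [hnrm] at hq
    rw [inner_sub_left] at hq
    have hyy : ⟪ys, yh⟫ = -⟪ys, xh⟫ := by rw [hyhx, inner_neg_right]
    rw [hxy, hτ0, hτx, hτy, hba, hyy]
    rw [norm_zero]
    nlinarith [hq, ha]
  · have hc : (0:ℝ) < ‖x + y‖ := norm_pos_iff.mpr hxy
    set c := ‖x + y‖ with hc_def
    set zh : EuclideanSpace ℝ (Fin 2) := c⁻¹ • (x + y) with hzh_def
    have hzh1 : ‖zh‖ = 1 := norm_smul_inv_norm hxy
    have hzs : x + y = c • zh := (smul_inv_smul₀ hc.ne' (x + y)).symm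
    obtain ⟨zs, hzsW, hzsm⟩ := hex zh
    have hτz : τ (x + y) = c * ⟪zs, zh⟫ := by
      rw [hzsm]; conv_lhs => rw [hzs, hhom c hc]
    have hq1 := hquad xh zh hxh1 hzh1 xs hxsW zs hzsW hxsm hzsm
    have hq2 := hquad yh zh hyh1 hzh1 ys hysW zs hzsW hysm hzsm
    rw [inner_sub_left] at hq1 hq2
    -- norm-square identities
    have hs1 : ‖xh - zh‖ ^ 2 = 2 - 2 * ⟪xh, zh⟫ := by
      have := norm_sub_sq_real xh zh
      rw [hxh1, hzh1] at this; rw [this]; ring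
    have hs2 : ‖yh - zh‖ ^ 2 = 2 - 2 * ⟪yh, zh⟫ := by
      have := norm_sub_sq_real yh zh
      rw [hyh1, hzh1] at this; rw [this]; ring
    rw [hs1] at hq1
    rw [hs2] at hq2
    -- key scalar relations
    have hsum : a * ⟪xh, zh⟫ + b * ⟪yh, zh⟫ = c := by
      have h1 : a * ⟪xh, zh⟫ = ⟪x, zh⟫ := by
        rw [hxh_def, real_inner_smul_left]
        field_simp
      have h2 : b * ⟪yh, zh⟫ = ⟪y, zh⟫ := by
        rw [hyh_def, real_inner_smul_left]
        field_simp
      have h3 : ⟪x, zh⟫ + ⟪y, zh⟫ = c := by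
        rw [← inner_add_left]
        conv_lhs => rw [hzs]
        rw [real_inner_smul_left, real_inner_self_eq_norm_sq, hzh1]
        ring
      rw [h1, h2, h3]
    have hzsplit : c * ⟪zs, zh⟫ = a * ⟪zs, xh⟫ + b * ⟪zs, yh⟫ := by
      rw [← real_inner_smul_right, ← real_inner_smul_right, ← real_inner_smul_right,
        ← inner_add_right, ← hxs, ← hys, ← hzs]
    have H1 : a * (K₁ * (2 - 2 * ⟪xh, zh⟫)) ≤ a * (⟪xs, xh⟫ - ⟪zs, xh⟫) :=
      mul_le_mul_of_nonneg_left hq1 ha.le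
    have H2 : b * (K₁ * (2 - 2 * ⟪yh, zh⟫)) ≤ b * (⟪ys, yh⟫ - ⟪zs, yh⟫) :=
      mul_le_mul_of_nonneg_left hq2 hb.le
    have key : τ x + τ y - τ (x + y)
        ≥ 2 * K₁ * (a + b - (a * ⟪xh, zh⟫ + b * ⟪yh, zh⟫)) := by
      rw [hτx, hτy, hτz, hzsplit]
      linarith [H1, H2]
    rw [hsum] at key
    exact key
end

section
/- If K₂ > 0 is such that τ̂(x) + τ̂(y) − τ̂(x+y) ≥ K₂·(‖x‖ + ‖y‖ − ‖x+y‖) for all x, y ∈ ℝ², then for all unit vectors x̂, ŷ and all points x*, y* ∈ W with ⟨x*, x̂⟩ = τ̂(x̂) and ⟨y*, ŷ⟩ = τ̂(ŷ), one has ⟨x* − y*, x̂⟩ ≥ (K₂/4)·‖x̂ − ŷ‖². -/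
open scoped RealInnerProductSpace

/-- The sharp triangle inequality with constant `K₂` implies the quadratic
inequality `⟨x* − y*, x̂⟩ ≥ (K₂/4)·‖x̂ − ŷ‖²` for points of `W` in duality with unit
vectors. -/
theorem quadratic_duality_bound_of_sharp_triangle
    (W : Set (EuclideanSpace ℝ (Fin 2)))
    (hWcompact : IsCompact W) (hWconvex : Convex ℝ W)
    (hW0 : (0 : EuclideanSpace ℝ (Fin 2)) ∈ interior W)
    (τ : EuclideanSpace ℝ (Fin 2) → ℝ)
    (hτ : ∀ x, τ x = sSup ((fun y => ⟪y, x⟫) '' W))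
    (K₂ : ℝ) (hK₂ : 0 < K₂)
    (hSTI : ∀ x y : EuclideanSpace ℝ (Fin 2),
      τ x + τ y - τ (x + y) ≥ K₂ * (‖x‖ + ‖y‖ - ‖x + y‖)) :
    ∀ xh yh : EuclideanSpace ℝ (Fin 2), ‖xh‖ = 1 → ‖yh‖ = 1 →
      ∀ xs ∈ W, ∀ ys ∈ W, ⟪xs, xh⟫ = τ xh → ⟪ys, yh⟫ = τ yh →
        ⟪xs - ys, xh⟫ ≥ (K₂ / 4) * ‖xh - yh‖ ^ 2 := by
  intro xh yh hxh hyh xs hxs ys hys hxτ hyτ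
  -- τ(xh+yh) ≥ ⟪ys, xh+yh⟫
  have hbdd : BddAbove ((fun y => ⟪y, xh + yh⟫) '' W) :=
    ((hWcompact.image ((continuous_id.inner continuous_const))).bddAbove)
  have hsup : ⟪ys, xh + yh⟫ ≤ τ (xh + yh) := by
    rw [hτ]
    exact le_csSup hbdd ⟨ys, hys, rfl⟩
  have hkey : ⟪xs - ys, xh⟫ ≥ τ xh + τ yh - τ (xh + yh) := by
    have : ⟪ys, xh + yh⟫ = ⟪ys, xh⟫ + τ yh := by rw [inner_add_right, hyτ]
    rw [inner_sub_left, hxτ]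
    linarith [hsup]
  have h1 := hSTI xh yh
  rw [hxh, hyh] at h1
  -- parallelogram: ‖xh+yh‖² + ‖xh−yh‖² = 4
  have hpar : ‖xh + yh‖ ^ 2 + ‖xh - yh‖ ^ 2 = 4 := by
    have ha := @norm_add_sq_real (EuclideanSpace ℝ (Fin 2)) _ _ xh yh
    have hb := @norm_sub_sq_real (EuclideanSpace ℝ (Fin 2)) _ _ xh yh
    rw [hxh, hyh] at ha hb
    linarith
  have ht2 : ‖xh + yh‖ ≤ 2 := by
    calc ‖xh + yh‖ ≤ ‖xh‖ + ‖yh‖ := norm_add_le _ _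
    _ = 2 := by rw [hxh, hyh]; norm_num
  have ht0 : (0:ℝ) ≤ ‖xh + yh‖ := norm_nonneg _
  nlinarith [mul_nonneg hK₂.le (sq_nonneg (‖xh + yh‖ - 2))]
end

section
/- If there exists K > 0 such that τ̂(x) + τ̂(y) − τ̂(x+y) ≥ K·(‖x‖ + ‖y‖ − ‖x+y‖) for all x, y ∈ ℝ², then W has no corner: for every y* ∈ W there is at most one unit vector x̂ with ⟨y*, x̂⟩ = τ̂(x̂). -/
/-!
If `y*` attains `τ̂` at two unit vectors, the support-function gap `τ̂ x̂₁ + τ̂ x̂₂ - τ̂ (x̂₁ + x̂₂)`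
is `≤ 0`, since `⟪y*, x̂₁ + x̂₂⟫ ≤ τ̂ (x̂₁ + x̂₂)`. The sharp triangle inequality then forces
`‖x̂₁ + x̂₂‖ = ‖x̂₁‖ + ‖x̂₂‖`, and strict convexity of the Euclidean norm gives `x̂₁ = x̂₂`.
-/

open scoped RealInnerProductSpace

section
variable {E : Type*} [NormedAddCommGroup E] [InnerProductSpace ℝ E]

theorem inner_le_sSup_image_inner {W : Set E} (hW : IsCompact W) {y : E} (hy : y ∈ W) (x : E) :
    ⟪y, x⟫ ≤ sSup ((fun z => ⟪z, x⟫) '' W) :=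
  le_csSup (hW.image (continuous_id.inner continuous_const)).bddAbove ⟨y, hy, rfl⟩

theorem norm_add_eq_of_sharp_triangle {τ : E → ℝ} {K : ℝ} (hK : 0 < K) {ys x y : E}
    (hsti : τ x + τ y - τ (x + y) ≥ K * (‖x‖ + ‖y‖ - ‖x + y‖))
    (hx : ⟪ys, x⟫ = τ x) (hy : ⟪ys, y⟫ = τ y) (hxy : ⟪ys, x + y⟫ ≤ τ (x + y)) :
    ‖x + y‖ = ‖x‖ + ‖y‖ := by
  have hgap : τ x + τ y - τ (x + y) ≤ 0 := by
    rw [← hx, ← hy, ← inner_add_right]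
    linarith
  have hdefect : ‖x‖ + ‖y‖ - ‖x + y‖ ≤ 0 := nonpos_of_mul_nonpos_right (hsti.trans hgap) hK
  exact le_antisymm (norm_add_le x y) (by linarith)

end

theorem no_corner_of_sharp_triangle_general
    (W : Set (EuclideanSpace ℝ (Fin 2)))
    (hWcompact : IsCompact W)
    (τ : EuclideanSpace ℝ (Fin 2) → ℝ)
    (hτ : ∀ x, τ x = sSup ((fun y => ⟪y, x⟫) '' W))
    (hSTI : ∃ K > (0 : ℝ), ∀ x y : EuclideanSpace ℝ (Fin 2),
      τ x + τ y - τ (x + y) ≥ K * (‖x‖ + ‖y‖ - ‖x + y‖)) :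
    ∀ ys ∈ W, ∀ xh₁ xh₂ : EuclideanSpace ℝ (Fin 2), ‖xh₁‖ = 1 → ‖xh₂‖ = 1 →
      ⟪ys, xh₁⟫ = τ xh₁ → ⟪ys, xh₂⟫ = τ xh₂ → xh₁ = xh₂ := by
  intro ys hys xh₁ xh₂ h₁ h₂ hd₁ hd₂
  obtain ⟨K, hK, hsti⟩ := hSTI
  have hsum : ⟪ys, xh₁ + xh₂⟫ ≤ τ (xh₁ + xh₂) :=
    (hτ _).symm ▸ inner_le_sSup_image_inner hWcompact hys _
  exact eq_of_norm_eq_of_norm_add_eq (h₁.trans h₂.symm)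
    (norm_add_eq_of_sharp_triangle hK (hsti xh₁ xh₂) hd₁ hd₂ hsum)

/-- The sharp triangle inequality implies that `W` has no corner: each
point of `W` is in duality with at most one unit vector. -/
theorem no_corner_of_sharp_triangle
    (W : Set (EuclideanSpace ℝ (Fin 2)))
    (hWcompact : IsCompact W) (hWconvex : Convex ℝ W)
    (hW0 : (0 : EuclideanSpace ℝ (Fin 2)) ∈ interior W)
    (τ : EuclideanSpace ℝ (Fin 2) → ℝ)
    (hτ : ∀ x, τ x = sSup ((fun y => ⟪y, x⟫) '' W))
    (hSTI : ∃ K > (0 : ℝ), ∀ x y : EuclideanSpace ℝ (Fin 2),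
      τ x + τ y - τ (x + y) ≥ K * (‖x‖ + ‖y‖ - ‖x + y‖)) :
    ∀ ys ∈ W, ∀ xh₁ xh₂ : EuclideanSpace ℝ (Fin 2), ‖xh₁‖ = 1 → ‖xh₂‖ = 1 →
      ⟪ys, xh₁⟫ = τ xh₁ → ⟪ys, xh₂⟫ = τ xh₂ → xh₁ = xh₂ :=
  no_corner_of_sharp_triangle_general W hWcompact τ hτ hSTI
end

section
/- Let τ̂ : ℝ² → ℝ be convex and positively homogeneous of degree one, and suppose τ̂ satisfies the sharp triangle inequality with constant Δ > 0, i.e. τ̂(x) + τ̂(y) − τ̂(x+y) ≥ Δ·(‖x‖ + ‖y‖ − ‖x+y‖) for all x, y ∈ ℝ². Let w > 0 and let γ : [0, w] → ℝ² be continuously differentiable with derivative γ'. Then ∫₀ʷ τ̂(γ'(s)) ds − τ̂(γ(w) − γ(0)) ≥ Δ·(∫₀ʷ ‖γ'(s)‖ ds − ‖γ(w) − γ(0)‖); in particular, if the length ∫₀ʷ ‖γ'(s)‖ ds strictly exceeds ‖γ(w) − γ(0)‖, then ∫₀ʷ τ̂(γ'(s)) ds > τ̂(γ(w) − γ(0)).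 -/
open scoped RealInnerProductSpace

open MeasureTheory

/-!
The sharp triangle inequality says exactly that `φ := τ̂ - Δ‖·‖` is subadditive; being also
positively homogeneous, `φ` is sublinear, hence convex, and Jensen's inequality gives
`φ (∫ γ') ≤ ∫ φ ∘ γ'` for any finite measure. Since `∫₀ʷ γ' = γ w - γ 0`, this is the claim.
-/

theorem convexOn_univ_of_subadditive_of_homogeneous {E : Type*} [AddCommGroup E] [Module ℝ E]
    {φ : E → ℝ}
    (hadd : ∀ x y, φ (x + y) ≤ φ x + φ y) (hsmul : ∀ c : ℝ, 0 ≤ c → ∀ x, φ (c • x) = c * φ x) :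
    ConvexOn ℝ Set.univ φ := by
  refine ⟨convex_univ, fun x _ y _ a b ha hb _ => ?_⟩
  calc φ (a • x + b • y) ≤ φ (a • x) + φ (b • y) := hadd _ _
    _ = a • φ x + b • φ y := by rw [hsmul a ha, hsmul b hb, smul_eq_mul, smul_eq_mul]

section Sublinear

variable {E : Type*} [NormedAddCommGroup E] [NormedSpace ℝ E] [CompleteSpace E] {φ : E → ℝ}
  {α : Type*} [MeasurableSpace α]

theorem map_integral_le_integral_of_subadditive_of_homogeneous
    (hadd : ∀ x y, φ (x + y) ≤ φ x + φ y) (hsmul : ∀ c : ℝ, 0 ≤ c → ∀ x, φ (c • x) = c * φ x)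
    (hφ : Continuous φ) {μ : Measure α} [IsFiniteMeasure μ] {f : α → E}
    (hf : Integrable f μ) (hφf : Integrable (φ ∘ f) μ) :
    φ (∫ x, f x ∂μ) ≤ ∫ x, φ (f x) ∂μ := by
  rcases eq_zero_or_neZero μ with rfl | hμ
  · simpa using (hsmul 0 le_rfl 0).le
  have hJensen := (convexOn_univ_of_subadditive_of_homogeneous hadd hsmul).map_average_le
    hφ.continuousOn isClosed_univ (.of_forall fun _ => Set.mem_univ _) hf hφf
  have hmass : 0 < μ.real Set.univ := measureReal_univ_pos
  rw [average_eq, average_eq, hsmul _ (inv_nonneg.2 hmass.le), smul_eq_mul] at hJensen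
  exact (mul_le_mul_iff_of_pos_left (inv_pos.2 hmass)).1 hJensen

theorem map_intervalIntegral_le_of_subadditive_of_homogeneous
    (hadd : ∀ x y, φ (x + y) ≤ φ x + φ y) (hsmul : ∀ c : ℝ, 0 ≤ c → ∀ x, φ (c • x) = c * φ x)
    (hφ : Continuous φ) {a b : ℝ} (hab : a ≤ b) {f : ℝ → E}
    (hf : IntervalIntegrable f volume a b) (hφf : IntervalIntegrable (φ ∘ f) volume a b) :
    φ (∫ x in a..b, f x) ≤ ∫ x in a..b, φ (f x) := by
  simp only [intervalIntegral.integral_of_le hab]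
  exact map_integral_le_integral_of_subadditive_of_homogeneous hadd hsmul hφ hf.1 hφf.1

end Sublinear

/-- If `τ̂` satisfies the sharp triangle inequality with constant `Δ > 0`,
then the energy defect of a C¹ curve dominates `Δ` times its length defect; in particular
a curve strictly longer than its chord has strictly larger energy than the chord. -/
theorem curve_energy_defect_ge_length_defect
    (τ : EuclideanSpace ℝ (Fin 2) → ℝ)
    (hconv : ConvexOn ℝ Set.univ τ)
    (hhom : ∀ c : ℝ, 0 ≤ c → ∀ x, τ (c • x) = c * τ x)
    (Δ : ℝ) (hΔ : 0 < Δ)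
    (hSTI : ∀ x y : EuclideanSpace ℝ (Fin 2),
      τ x + τ y - τ (x + y) ≥ Δ * (‖x‖ + ‖y‖ - ‖x + y‖))
    (w : ℝ) (hw : 0 < w)
    (γ γ' : ℝ → EuclideanSpace ℝ (Fin 2))
    (hderiv : ∀ s ∈ Set.Icc (0 : ℝ) w, HasDerivAt γ (γ' s) s)
    (hcont : ContinuousOn γ' (Set.Icc (0 : ℝ) w)) :
    (∫ s in (0 : ℝ)..w, τ (γ' s)) - τ (γ w - γ 0) ≥
        Δ * ((∫ s in (0 : ℝ)..w, ‖γ' s‖) - ‖γ w - γ 0‖) ∧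
      ((∫ s in (0 : ℝ)..w, ‖γ' s‖) > ‖γ w - γ 0‖ →
        (∫ s in (0 : ℝ)..w, τ (γ' s)) > τ (γ w - γ 0)) := by
  set φ : EuclideanSpace ℝ (Fin 2) → ℝ := fun x => τ x - Δ * ‖x‖
  have hadd (x y) : φ (x + y) ≤ φ x + φ y := by linarith [hSTI x y]
  have hsmul (c : ℝ) (hc : 0 ≤ c) (x) : φ (c • x) = c * φ x := by
    simp only [φ, hhom c hc, norm_smul, Real.norm_of_nonneg hc]; ring
  have hτ : Continuous τ := hconv.locallyLipschitz.continuous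
  have hγ' : IntervalIntegrable γ' volume 0 w := hcont.intervalIntegrable_of_Icc hw.le
  have hτγ' : IntervalIntegrable (fun s => τ (γ' s)) volume 0 w :=
    (hτ.comp_continuousOn hcont).intervalIntegrable_of_Icc hw.le
  have hchord : ∫ s in (0 : ℝ)..w, γ' s = γ w - γ 0 :=
    intervalIntegral.integral_eq_sub_of_hasDerivAt
      (fun s hs => hderiv s (Set.uIcc_of_le hw.le ▸ hs)) hγ'
  have hnorm : IntervalIntegrable (fun s => Δ * ‖γ' s‖) volume 0 w := hγ'.norm.const_mul Δ
  have hJensen := map_intervalIntegral_le_of_subadditive_of_homogeneous hadd hsmul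
    (hτ.sub (continuous_const.mul continuous_norm)) hw.le hγ' (hτγ'.sub hnorm)
  have hsplit : ∫ s in (0 : ℝ)..w, φ (γ' s) =
      (∫ s in (0 : ℝ)..w, τ (γ' s)) - Δ * ∫ s in (0 : ℝ)..w, ‖γ' s‖ := by
    rw [← intervalIntegral.integral_const_mul, ← intervalIntegral.integral_sub hτγ' hnorm]
  have hdefect : (∫ s in (0 : ℝ)..w, τ (γ' s)) - τ (γ w - γ 0) ≥
      Δ * ((∫ s in (0 : ℝ)..w, ‖γ' s‖) - ‖γ w - γ 0‖) := by
    rw [hchord, hsplit] at hJensen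
    linarith
  exact ⟨hdefect, fun hlonger => by linarith [mul_pos hΔ (sub_pos.2 hlonger)]⟩
end

section
/- Assume in addition τ(θ) + τ''(θ) > 0 for all θ ∈ (0, π/2), and let x > 0. Then θ ↦ g(θ, x) is strictly decreasing on (0, θ_Y] and strictly increasing on [θ_Y, π/2); in particular g(θ, x) > g(θ_Y, x) for every θ ∈ (0, π/2) with θ ≠ θ_Y, so θ_Y is the strict absolute minimum of g(·, x) on (0, π/2). -/
open Real Set

/-!
Differentiating in `θ` gives `∂g/∂θ (θ, x) = -x · D(θ) / sin² θ` with the Herring–Young defect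
`D(θ) = cos θ · τ(θ) - sin θ · τ'(θ) - τ_bd`. Since `D'(θ) = -sin θ · (τ(θ) + τ''(θ)) < 0`, the
defect is strictly decreasing, and it vanishes at `θ_Y`; so `∂g/∂θ` is negative before `θ_Y` and
positive after it.
-/

noncomputable def herringYoungDefect (τ τ' : ℝ → ℝ) (τbd θ : ℝ) : ℝ :=
  cos θ * τ θ - sin θ * τ' θ - τbd

theorem hasDerivAt_herringYoungDefect {τ τ' : ℝ → ℝ} {τbd θ τ''θ : ℝ}
    (hτ : HasDerivAt τ (τ' θ) θ) (hτ' : HasDerivAt τ' τ''θ θ) :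
    HasDerivAt (herringYoungDefect τ τ' τbd) (-(sin θ * (τ θ + τ''θ))) θ := by
  refine ((((hasDerivAt_cos θ).mul hτ).sub ((hasDerivAt_sin θ).mul hτ')).sub_const
    τbd).congr_deriv ?_
  ring

theorem strictAntiOn_herringYoungDefect {τ τ' τ'' : ℝ → ℝ} {τbd : ℝ} {s : Set ℝ}
    (hs : Convex ℝ s) (hsπ : s ⊆ Ioo 0 π)
    (hτ : ∀ θ ∈ s, HasDerivAt τ (τ' θ) θ) (hτ' : ∀ θ ∈ s, HasDerivAt τ' (τ'' θ) θ)
    (hstiff : ∀ θ ∈ s, 0 < τ θ + τ'' θ) :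
    StrictAntiOn (herringYoungDefect τ τ' τbd) s := by
  have hderiv : ∀ θ ∈ s, HasDerivAt (herringYoungDefect τ τ' τbd) (-(sin θ * (τ θ + τ'' θ))) θ :=
    fun θ hθ => hasDerivAt_herringYoungDefect (hτ θ hθ) (hτ' θ hθ)
  refine strictAntiOn_of_hasDerivWithinAt_neg hs
    (fun θ hθ => (hderiv θ hθ).continuousAt.continuousWithinAt)
    (fun θ hθ => (hderiv θ (interior_subset hθ)).hasDerivWithinAt) fun θ hθ => ?_
  replace hθ := interior_subset hθ
  exact neg_neg_of_pos (mul_pos (sin_pos_of_mem_Ioo (hsπ hθ)) (hstiff θ hθ))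

theorem hasDerivAt_interfaceEnergy {τ τ' : ℝ → ℝ} {τbd x θ : ℝ}
    (hτ : HasDerivAt τ (τ' θ) θ) (hsin : sin θ ≠ 0) (hcos : cos θ ≠ 0) :
    HasDerivAt (fun θ => τ θ * x / sin θ + τbd * (1 / 2 - x / tan θ))
      (-(x * herringYoungDefect τ τ' τbd θ) / sin θ ^ 2) θ := by
  have htan : tan θ ≠ 0 := by rw [tan_eq_sin_div_cos]; exact div_ne_zero hsin hcos
  refine (((hτ.mul_const x).div (hasDerivAt_sin θ) hsin).add
    ((((hasDerivAt_const θ x).div (hasDerivAt_tan hcos) htan).const_sub (1 / 2)).const_mul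
      τbd)).congr_deriv ?_
  rw [herringYoungDefect, tan_eq_sin_div_cos]
  field_simp
  ring

theorem strictAntiOn_Ioc_and_strictMonoOn_Ico_of_hasDerivAt {f f' : ℝ → ℝ} {a b c : ℝ}
    (hc : c ∈ Ioo a b) (hf : ∀ θ ∈ Ioo a b, HasDerivAt f (f' θ) θ)
    (hneg : ∀ θ ∈ Ioo a c, f' θ < 0) (hpos : ∀ θ ∈ Ioo c b, 0 < f' θ) :
    StrictAntiOn f (Ioc a c) ∧ StrictMonoOn f (Ico c b) := by
  have hleft : Ioc a c ⊆ Ioo a b := Ioc_subset_Ioo_right hc.2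
  have hright : Ico c b ⊆ Ioo a b := Ico_subset_Ioo_left hc.1
  constructor
  · refine strictAntiOn_of_hasDerivWithinAt_neg (f' := f') (convex_Ioc a c)
      (fun θ hθ => (hf θ (hleft hθ)).continuousAt.continuousWithinAt) (fun θ hθ => ?_) ?_
    · rw [interior_Ioc] at hθ
      exact (hf θ (hleft (Ioo_subset_Ioc_self hθ))).hasDerivWithinAt
    · simpa only [interior_Ioc] using hneg
  · refine strictMonoOn_of_hasDerivWithinAt_pos (f' := f') (convex_Ico c b)
      (fun θ hθ => (hf θ (hright hθ)).continuousAt.continuousWithinAt) (fun θ hθ => ?_) ?_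
    · rw [interior_Ico] at hθ
      exact (hf θ (hright (Ioo_subset_Ico_self hθ))).hasDerivWithinAt
    · simpa only [interior_Ico] using hpos

theorem lt_of_strictAntiOn_Ioc_of_strictMonoOn_Ico {f : ℝ → ℝ} {a b c θ : ℝ}
    (hc : c ∈ Ioo a b) (hanti : StrictAntiOn f (Ioc a c)) (hmono : StrictMonoOn f (Ico c b))
    (hθ : θ ∈ Ioo a b) (hne : θ ≠ c) : f c < f θ := by
  rcases hne.lt_or_gt with hlt | hgt
  · exact hanti ⟨hθ.1, hlt.le⟩ ⟨hc.1, le_rfl⟩ hlt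
  · exact hmono ⟨le_rfl, hc.2⟩ ⟨hgt.le, hθ.2⟩ hgt

theorem herring_young_strict_minimum_general
    (τ τ' τ'' : ℝ → ℝ) (τbd : ℝ)
    (hd1 : ∀ θ ∈ Set.Ioo (0 : ℝ) (π / 2), HasDerivAt τ (τ' θ) θ)
    (hd2 : ∀ θ ∈ Set.Ioo (0 : ℝ) (π / 2), HasDerivAt τ' (τ'' θ) θ)
    (θY : ℝ) (hθY : θY ∈ Set.Ioo (0 : ℝ) (π / 2))
    (hHY : Real.cos θY * τ θY - Real.sin θY * τ' θY = τbd)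
    (hstiff : ∀ θ ∈ Set.Ioo (0 : ℝ) (π / 2), 0 < τ θ + τ'' θ)
    (x : ℝ) (hx : 0 < x)
    (g : ℝ → ℝ → ℝ)
    (hg : ∀ θ y : ℝ, g θ y = τ θ * y / Real.sin θ + τbd * (1 / 2 - y / Real.tan θ)) :
    StrictAntiOn (fun θ => g θ x) (Set.Ioc (0 : ℝ) θY) ∧
      StrictMonoOn (fun θ => g θ x) (Set.Ico θY (π / 2)) ∧
      ∀ θ ∈ Set.Ioo (0 : ℝ) (π / 2), θ ≠ θY → g θ x > g θY x := by
  have hsin : ∀ θ ∈ Ioo 0 (π / 2), 0 < sin θ := fun θ hθ =>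
    sin_pos_of_mem_Ioo (Ioo_subset_Ioo_right (half_le_self pi_pos.le) hθ)
  have hcos : ∀ θ ∈ Ioo 0 (π / 2), cos θ ≠ 0 := fun θ hθ =>
    (cos_pos_of_mem_Ioo ⟨by linarith [hθ.1, pi_pos], hθ.2⟩).ne'
  have hgx : (fun θ => g θ x) = fun θ => τ θ * x / sin θ + τbd * (1 / 2 - x / tan θ) :=
    funext fun θ => hg θ x
  have hdefect : StrictAntiOn (herringYoungDefect τ τ' τbd) (Ioo 0 (π / 2)) :=
    strictAntiOn_herringYoungDefect (convex_Ioo 0 (π / 2))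
      (Ioo_subset_Ioo_right (half_le_self pi_pos.le)) hd1 hd2 hstiff
  have hzero : herringYoungDefect τ τ' τbd θY = 0 := sub_eq_zero.2 hHY
  obtain ⟨hanti, hmono⟩ := strictAntiOn_Ioc_and_strictMonoOn_Ico_of_hasDerivAt hθY
    (fun θ hθ => hgx ▸ hasDerivAt_interfaceEnergy (hd1 θ hθ) (hsin θ hθ).ne' (hcos θ hθ))
    (fun θ hθ => by
      have := hzero ▸ hdefect ⟨hθ.1, hθ.2.trans hθY.2⟩ hθY hθ.2
      exact div_neg_of_neg_of_pos (neg_neg_of_pos (mul_pos hx this))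
        (pow_pos (hsin θ ⟨hθ.1, hθ.2.trans hθY.2⟩) 2))
    (fun θ hθ => by
      have := hzero ▸ hdefect hθY ⟨hθY.1.trans hθ.1, hθ.2⟩ hθ.1
      exact div_pos (neg_pos.2 (mul_neg_of_pos_of_neg hx this))
        (pow_pos (hsin θ ⟨hθY.1.trans hθ.1, hθ.2⟩) 2))
  exact ⟨hanti, hmono, fun θ hθ hne =>
    lt_of_strictAntiOn_Ioc_of_strictMonoOn_Ico hθY hanti hmono hθ hne⟩

/-- Under positive stiffness `τ(θ) + τ''(θ) > 0` on `(0, π/2)`, the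
function `θ ↦ g(θ, x)` is strictly decreasing on `(0, θ_Y]` and strictly increasing on
`[θ_Y, π/2)`, so `θ_Y` is its strict absolute minimum on `(0, π/2)`. -/
theorem herring_young_strict_minimum
    (τ τ' τ'' : ℝ → ℝ) (τbd : ℝ)
    (hd1 : ∀ θ ∈ Set.Ioo (0 : ℝ) (π / 2), HasDerivAt τ (τ' θ) θ)
    (hd2 : ∀ θ ∈ Set.Ioo (0 : ℝ) (π / 2), HasDerivAt τ' (τ'' θ) θ)
    (hc : ContinuousOn τ'' (Set.Ioo (0 : ℝ) (π / 2)))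
    (θY : ℝ) (hθY : θY ∈ Set.Ioo (0 : ℝ) (π / 2))
    (hHY : Real.cos θY * τ θY - Real.sin θY * τ' θY = τbd)
    (hstiff : ∀ θ ∈ Set.Ioo (0 : ℝ) (π / 2), 0 < τ θ + τ'' θ)
    (x : ℝ) (hx : 0 < x)
    (g : ℝ → ℝ → ℝ)
    (hg : ∀ θ y : ℝ, g θ y = τ θ * y / Real.sin θ + τbd * (1 / 2 - y / Real.tan θ)) :
    StrictAntiOn (fun θ => g θ x) (Set.Ioc (0 : ℝ) θY) ∧
      StrictMonoOn (fun θ => g θ x) (Set.Ico θY (π / 2)) ∧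
      ∀ θ ∈ Set.Ioo (0 : ℝ) (π / 2), θ ≠ θY → g θ x > g θY x :=
  herring_young_strict_minimum_general τ τ' τ'' τbd hd1 hd2 θY hθY hHY hstiff x hx g hg
end

section
/- For every x > 0 and every θ ∈ (0, π/2), the partial derivative of g with respect to θ satisfies (∂g/∂θ)(θ, x) = x · ∫_{θ_Y}^{θ} exp( − ∫_{γ}^{θ} 2·(cos α / sin α) dα ) · (τ(γ) + τ''(γ)) / sin γ dγ. -/
/-!
Since `exp (-∫_γ^θ 2 cot) = sin² γ / sin² θ`, the right-hand side is
`x / sin² θ · ∫_{θ_Y}^θ sin γ (τ γ + τ'' γ) dγ`, and `sin γ (τ + τ'')` is the derivative of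
`sin γ · τ' γ - cos γ · τ γ`. By the Herring–Young equation this antiderivative equals `-τ_bd`
at `θ_Y`, so the integral is `x (sin θ τ' θ - cos θ τ θ + τ_bd) / sin² θ`, which is `∂g/∂θ`.
-/

open Real Set

theorem integral_cos_div_sin {a b : ℝ} (h : ∀ t ∈ uIcc a b, sin t ≠ 0) :
    ∫ t in a..b, cos t / sin t = log (sin b) - log (sin a) := by
  refine intervalIntegral.integral_eq_sub_of_hasDerivAt
    (fun t ht => (hasDerivAt_sin t).log (h t ht)) ?_
  exact (continuous_cos.continuousOn.div continuous_sin.continuousOn h).intervalIntegrable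

theorem exp_neg_integral_two_cot {c θ : ℝ} (h : ∀ t ∈ uIcc c θ, sin t ≠ 0) :
    exp (-∫ α in c..θ, 2 * (cos α / sin α)) = sin c ^ 2 / sin θ ^ 2 := by
  have exp_two_log : ∀ {s : ℝ}, s ≠ 0 → exp (2 * log s) = s ^ 2 := fun hs => by
    rw [show (2 : ℝ) = (2 : ℕ) by norm_num, exp_nat_mul, exp_log_eq_abs hs, sq_abs]
  rw [intervalIntegral.integral_const_mul, integral_cos_div_sin h,
    show -(2 * (log (sin θ) - log (sin c))) = 2 * log (sin c) - 2 * log (sin θ) by ring,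
    exp_sub, exp_two_log (h c left_mem_uIcc), exp_two_log (h θ right_mem_uIcc)]

section SecondOrder

variable {τ τ' τ'' : ℝ → ℝ}

theorem hasDerivAt_sin_mul_sub_cos_mul {θ : ℝ} (h₁ : HasDerivAt τ (τ' θ) θ)
    (h₂ : HasDerivAt τ' (τ'' θ) θ) :
    HasDerivAt (fun t => sin t * τ' t - cos t * τ t) (sin θ * (τ θ + τ'' θ)) θ :=
  (((hasDerivAt_sin θ).fun_mul h₂).fun_sub ((hasDerivAt_cos θ).fun_mul h₁)).congr_deriv (by ring)

theorem integral_sin_mul_add_deriv2 {a b : ℝ}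
    (h₁ : ∀ t ∈ uIcc a b, HasDerivAt τ (τ' t) t) (h₂ : ∀ t ∈ uIcc a b, HasDerivAt τ' (τ'' t) t)
    (hc : ContinuousOn τ'' (uIcc a b)) :
    ∫ t in a..b, sin t * (τ t + τ'' t)
      = (sin b * τ' b - cos b * τ b) - (sin a * τ' a - cos a * τ a) := by
  refine intervalIntegral.integral_eq_sub_of_hasDerivAt
    (fun t ht => hasDerivAt_sin_mul_sub_cos_mul (h₁ t ht) (h₂ t ht)) ?_
  have hτ : ContinuousOn τ (uIcc a b) := fun t ht => (h₁ t ht).continuousAt.continuousWithinAt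
  exact (continuous_sin.continuousOn.mul (hτ.add hc)).intervalIntegrable

theorem hasDerivAt_div_sin_sub_div_tan {θ : ℝ} (x τbd : ℝ) (hτ : HasDerivAt τ (τ' θ) θ)
    (hθ : sin θ ≠ 0) :
    HasDerivAt (fun t => τ t * x / sin t + τbd * (1 / 2 - x / tan t))
      (x * ((sin θ * τ' θ - cos θ * τ θ + τbd) / sin θ ^ 2)) θ := by
  have hcot : ∀ t, x / tan t = x * (cos t / sin t) := fun t => by
    rw [tan_eq_sin_div_cos, div_div_eq_mul_div, mul_div_assoc]
  simp only [hcot]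
  refine (((hτ.mul_const x).fun_div (hasDerivAt_sin θ) hθ).fun_add
    ((((hasDerivAt_cos θ).fun_div (hasDerivAt_sin θ) hθ).const_mul x).const_sub (1 / 2)
      |>.const_mul τbd)).congr_deriv ?_
  field_simp
  linear_combination x * τbd * sin_sq_add_cos_sq θ

end SecondOrder

/-- Integral representation of the angular derivative of `g`:
`(∂g/∂θ)(θ, x) = x·∫_{θ_Y}^{θ} exp(−∫_γ^θ 2·cot α dα)·(τ(γ) + τ''(γ))/sin γ dγ`. -/
theorem herring_young_derivative_formula
    (τ τ' τ'' : ℝ → ℝ) (τbd : ℝ)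
    (hd1 : ∀ θ ∈ Set.Ioo (0 : ℝ) (π / 2), HasDerivAt τ (τ' θ) θ)
    (hd2 : ∀ θ ∈ Set.Ioo (0 : ℝ) (π / 2), HasDerivAt τ' (τ'' θ) θ)
    (hc : ContinuousOn τ'' (Set.Ioo (0 : ℝ) (π / 2)))
    (θY : ℝ) (hθY : θY ∈ Set.Ioo (0 : ℝ) (π / 2))
    (hHY : Real.cos θY * τ θY - Real.sin θY * τ' θY = τbd)
    (g : ℝ → ℝ → ℝ)
    (hg : ∀ θ y : ℝ, g θ y = τ θ * y / Real.sin θ + τbd * (1 / 2 - y / Real.tan θ)) :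
    ∀ x : ℝ, 0 < x → ∀ θ ∈ Set.Ioo (0 : ℝ) (π / 2),
      HasDerivAt (fun t => g t x)
        (x * ∫ c in θY..θ,
          Real.exp (-∫ α in c..θ, 2 * (Real.cos α / Real.sin α)) *
            ((τ c + τ'' c) / Real.sin c)) θ := by
  intro x _ θ hθ
  have hsub : uIcc θY θ ⊆ Ioo 0 (π / 2) := ordConnected_Ioo.uIcc_subset hθY hθ
  have hsin : ∀ t ∈ Ioo (0 : ℝ) (π / 2), sin t ≠ 0 := fun t ht =>
    (sin_pos_of_pos_of_lt_pi ht.1 (ht.2.trans (half_lt_self pi_pos))).ne'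
  have hweight : EqOn
      (fun c => exp (-∫ α in c..θ, 2 * (cos α / sin α)) * ((τ c + τ'' c) / sin c))
      (fun c => (sin θ ^ 2)⁻¹ * (sin c * (τ c + τ'' c))) (uIcc θY θ) := by
    intro c hc'
    have hcθ : uIcc c θ ⊆ Ioo 0 (π / 2) := ordConnected_Ioo.uIcc_subset (hsub hc') hθ
    simp only
    rw [exp_neg_integral_two_cot fun t ht => hsin t (hcθ ht)]
    field_simp [hsin c (hsub hc')]
  rw [intervalIntegral.integral_congr hweight, intervalIntegral.integral_const_mul,
    integral_sin_mul_add_deriv2 (fun t ht => hd1 t (hsub ht)) (fun t ht => hd2 t (hsub ht))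
      (hc.mono hsub), show (fun t => g t x) = _ from funext fun t => hg t x]
  convert hasDerivAt_div_sin_sub_div_tan x τbd (hd1 θ hθ) (hsin θ hθ) using 2
  rw [← hHY]
  ring
end

section
/- Assume in addition τ(θ) + τ''(θ) > 0 for all θ ∈ (0, π/2), and let a > 0, b > 0. Then for all θ₁, θ₂ ∈ (0, π/2): g(θ₁, a) + g(θ₂, b) ≥ g(θ_Y, a) + g(θ_Y, b), with equality if and only if θ₁ = θ_Y and θ₂ = θ_Y. -/
/-!
Since `x / tan θ = x cos θ / sin θ`, the energy `g(θ, x)` is affine in `x` with slope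
`E θ = (τ θ - τ_bd cos θ) / sin θ` (`effectiveTension`), so it suffices to show that `E` has a
strict minimum at `θ_Y`. Its derivative is `R θ / sin² θ`, where
`R θ = τ' θ sin θ - τ θ cos θ + τ_bd` (`herringYoungResidual`) vanishes at `θ_Y` by the
Herring–Young equation and has derivative `(τ θ + τ'' θ) sin θ > 0`. Hence `E'` changes sign from
negative to positive exactly at `θ_Y`.
-/

open Real Set

theorem lt_of_hasDerivAt_of_neg_of_pos {f f' : ℝ → ℝ} {a b c x : ℝ}
    (hf : ∀ y ∈ Ioo a b, HasDerivAt f (f' y) y) (hc : c ∈ Ioo a b)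
    (hneg : ∀ y ∈ Ioo a c, f' y < 0) (hpos : ∀ y ∈ Ioo c b, 0 < f' y)
    (hx : x ∈ Ioo a b) (hxc : x ≠ c) : f c < f x := by
  have hcont : ContinuousOn f (Ioo a b) := fun y hy => (hf y hy).continuousAt.continuousWithinAt
  rcases hxc.lt_or_gt with hlt | hgt
  · have hanti : StrictAntiOn f (Ioc a c) :=
      strictAntiOn_of_deriv_neg (convex_Ioc a c)
        (hcont.mono fun y hy => ⟨hy.1, hy.2.trans_lt hc.2⟩) fun y hy => by
          rw [interior_Ioc] at hy
          rw [(hf y ⟨hy.1, hy.2.trans hc.2⟩).deriv]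
          exact hneg y hy
    exact hanti ⟨hx.1, hlt.le⟩ ⟨hc.1, le_rfl⟩ hlt
  · have hmono : StrictMonoOn f (Ico c b) :=
      strictMonoOn_of_deriv_pos (convex_Ico c b)
        (hcont.mono fun y hy => ⟨hc.1.trans_le hy.1, hy.2⟩) fun y hy => by
          rw [interior_Ico] at hy
          rw [(hf y ⟨hc.1.trans hy.1, hy.2⟩).deriv]
          exact hpos y hy
    exact hmono ⟨le_rfl, hc.2⟩ ⟨hgt.le, hx.2⟩ hgt

theorem sin_pos_of_mem_Ioo_zero_pi_div_two {θ : ℝ} (hθ : θ ∈ Ioo 0 (π / 2)) : 0 < sin θ :=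
  sin_pos_of_pos_of_lt_pi hθ.1 (hθ.2.trans (half_lt_self pi_pos))

section HerringYoung

variable (τ τ' τ'' : ℝ → ℝ) (τbd : ℝ)

noncomputable def effectiveTension (θ : ℝ) : ℝ := (τ θ - τbd * cos θ) / sin θ

noncomputable def herringYoungResidual (θ : ℝ) : ℝ := τ' θ * sin θ - τ θ * cos θ + τbd

theorem energy_eq_mul_effectiveTension_add (θ y : ℝ) :
    τ θ * y / sin θ + τbd * (1 / 2 - y / tan θ) = y * effectiveTension τ τbd θ + τbd / 2 := by
  rw [effectiveTension, tan_eq_sin_div_cos, div_div_eq_mul_div]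
  ring

variable {τ τ' τ''} {θ : ℝ}

theorem hasDerivAt_herringYoungResidual (h1 : HasDerivAt τ (τ' θ) θ)
    (h2 : HasDerivAt τ' (τ'' θ) θ) :
    HasDerivAt (herringYoungResidual τ τ' τbd) ((τ θ + τ'' θ) * sin θ) θ :=
  (((h2.mul (hasDerivAt_sin θ)).sub (h1.mul (hasDerivAt_cos θ))).add_const τbd).congr_deriv
    (by ring)

theorem hasDerivAt_effectiveTension (h1 : HasDerivAt τ (τ' θ) θ) (hsin : sin θ ≠ 0) :
    HasDerivAt (effectiveTension τ τbd) (herringYoungResidual τ τ' τbd θ / sin θ ^ 2) θ := by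
  refine ((h1.sub ((hasDerivAt_cos θ).const_mul τbd)).div (hasDerivAt_sin θ) hsin).congr_deriv ?_
  simp only [herringYoungResidual, Pi.sub_apply]
  linear_combination τbd * sin_sq_add_cos_sq θ / sin θ ^ 2

theorem strictMonoOn_herringYoungResidual
    (hd1 : ∀ θ ∈ Ioo (0 : ℝ) (π / 2), HasDerivAt τ (τ' θ) θ)
    (hd2 : ∀ θ ∈ Ioo (0 : ℝ) (π / 2), HasDerivAt τ' (τ'' θ) θ)
    (hstiff : ∀ θ ∈ Ioo (0 : ℝ) (π / 2), 0 < τ θ + τ'' θ) :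
    StrictMonoOn (herringYoungResidual τ τ' τbd) (Ioo 0 (π / 2)) :=
  strictMonoOn_of_deriv_pos (convex_Ioo 0 (π / 2))
    (fun θ hθ => (hasDerivAt_herringYoungResidual τbd (hd1 θ hθ) (hd2 θ hθ)).continuousAt
      |>.continuousWithinAt) fun θ hθ => by
    rw [interior_Ioo] at hθ
    rw [(hasDerivAt_herringYoungResidual τbd (hd1 θ hθ) (hd2 θ hθ)).deriv]
    exact mul_pos (hstiff θ hθ) (sin_pos_of_mem_Ioo_zero_pi_div_two hθ)

theorem effectiveTension_lt (hd1 : ∀ θ ∈ Ioo (0 : ℝ) (π / 2), HasDerivAt τ (τ' θ) θ)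
    (hd2 : ∀ θ ∈ Ioo (0 : ℝ) (π / 2), HasDerivAt τ' (τ'' θ) θ)
    (hstiff : ∀ θ ∈ Ioo (0 : ℝ) (π / 2), 0 < τ θ + τ'' θ) {θY : ℝ}
    (hθY : θY ∈ Ioo (0 : ℝ) (π / 2)) (hHY : cos θY * τ θY - sin θY * τ' θY = τbd)
    (hθ : θ ∈ Ioo (0 : ℝ) (π / 2)) (hne : θ ≠ θY) :
    effectiveTension τ τbd θY < effectiveTension τ τbd θ := by
  have hR : herringYoungResidual τ τ' τbd θY = 0 := by
    rw [herringYoungResidual]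
    linarith
  have hmono := strictMonoOn_herringYoungResidual τbd hd1 hd2 hstiff
  have hsin_sq {φ : ℝ} (hφ : φ ∈ Ioo (0 : ℝ) (π / 2)) : 0 < sin φ ^ 2 :=
    pow_pos (sin_pos_of_mem_Ioo_zero_pi_div_two hφ) 2
  refine lt_of_hasDerivAt_of_neg_of_pos
    (fun φ hφ => hasDerivAt_effectiveTension τbd (hd1 φ hφ)
      (sin_pos_of_mem_Ioo_zero_pi_div_two hφ).ne') hθY (fun φ hφ => ?_) (fun φ hφ => ?_) hθ hne
  · have hφ' : φ ∈ Ioo (0 : ℝ) (π / 2) := ⟨hφ.1, hφ.2.trans hθY.2⟩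
    exact div_neg_of_neg_of_pos (hR ▸ hmono hφ' hθY hφ.2) (hsin_sq hφ')
  · have hφ' : φ ∈ Ioo (0 : ℝ) (π / 2) := ⟨hθY.1.trans hφ.1, hφ.2⟩
    exact div_pos (hR ▸ hmono hθY hφ' hφ.1) (hsin_sq hφ')

theorem effectiveTension_le (hd1 : ∀ θ ∈ Ioo (0 : ℝ) (π / 2), HasDerivAt τ (τ' θ) θ)
    (hd2 : ∀ θ ∈ Ioo (0 : ℝ) (π / 2), HasDerivAt τ' (τ'' θ) θ)
    (hstiff : ∀ θ ∈ Ioo (0 : ℝ) (π / 2), 0 < τ θ + τ'' θ) {θY : ℝ}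
    (hθY : θY ∈ Ioo (0 : ℝ) (π / 2)) (hHY : cos θY * τ θY - sin θY * τ' θY = τbd)
    (hθ : θ ∈ Ioo (0 : ℝ) (π / 2)) :
    effectiveTension τ τbd θY ≤ effectiveTension τ τbd θ := by
  rcases eq_or_ne θ θY with rfl | hne
  · exact le_rfl
  · exact (effectiveTension_lt τbd hd1 hd2 hstiff hθY hHY hθ hne).le

end HerringYoung

theorem herring_young_sum_minimum_general
    (τ τ' τ'' : ℝ → ℝ) (τbd : ℝ)
    (hd1 : ∀ θ ∈ Set.Ioo (0 : ℝ) (π / 2), HasDerivAt τ (τ' θ) θ)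
    (hd2 : ∀ θ ∈ Set.Ioo (0 : ℝ) (π / 2), HasDerivAt τ' (τ'' θ) θ)
    (θY : ℝ) (hθY : θY ∈ Set.Ioo (0 : ℝ) (π / 2))
    (hHY : Real.cos θY * τ θY - Real.sin θY * τ' θY = τbd)
    (hstiff : ∀ θ ∈ Set.Ioo (0 : ℝ) (π / 2), 0 < τ θ + τ'' θ)
    (a b : ℝ) (ha : 0 < a) (hb : 0 < b)
    (g : ℝ → ℝ → ℝ)
    (hg : ∀ θ y : ℝ, g θ y = τ θ * y / Real.sin θ + τbd * (1 / 2 - y / Real.tan θ)) :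
    ∀ θ₁ ∈ Set.Ioo (0 : ℝ) (π / 2), ∀ θ₂ ∈ Set.Ioo (0 : ℝ) (π / 2),
      g θ₁ a + g θ₂ b ≥ g θY a + g θY b ∧
        (g θ₁ a + g θ₂ b = g θY a + g θY b ↔ θ₁ = θY ∧ θ₂ = θY) := by
  intro θ₁ h₁ θ₂ h₂
  simp only [hg, energy_eq_mul_effectiveTension_add]
  have hle₁ := mul_le_mul_of_nonneg_left (effectiveTension_le τbd hd1 hd2 hstiff hθY hHY h₁) ha.le
  have hle₂ := mul_le_mul_of_nonneg_left (effectiveTension_le τbd hd1 hd2 hstiff hθY hHY h₂) hb.le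
  refine ⟨by linarith, fun heq => ⟨?_, ?_⟩, by rintro ⟨rfl, rfl⟩; rfl⟩
  · by_contra hne
    have := mul_lt_mul_of_pos_left (effectiveTension_lt τbd hd1 hd2 hstiff hθY hHY h₁ hne) ha
    linarith
  · by_contra hne
    have := mul_lt_mul_of_pos_left (effectiveTension_lt τbd hd1 hd2 hstiff hθY hHY h₂ hne) hb
    linarith

/-- Under positive stiffness, for `a, b > 0` the sum
`g(θ₁, a) + g(θ₂, b)` attains its minimum exactly at `θ₁ = θ₂ = θ_Y`. -/
theorem herring_young_sum_minimum
    (τ τ' τ'' : ℝ → ℝ) (τbd : ℝ)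
    (hd1 : ∀ θ ∈ Set.Ioo (0 : ℝ) (π / 2), HasDerivAt τ (τ' θ) θ)
    (hd2 : ∀ θ ∈ Set.Ioo (0 : ℝ) (π / 2), HasDerivAt τ' (τ'' θ) θ)
    (hc : ContinuousOn τ'' (Set.Ioo (0 : ℝ) (π / 2)))
    (θY : ℝ) (hθY : θY ∈ Set.Ioo (0 : ℝ) (π / 2))
    (hHY : Real.cos θY * τ θY - Real.sin θY * τ' θY = τbd)
    (hstiff : ∀ θ ∈ Set.Ioo (0 : ℝ) (π / 2), 0 < τ θ + τ'' θ)
    (a b : ℝ) (ha : 0 < a) (hb : 0 < b)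
    (g : ℝ → ℝ → ℝ)
    (hg : ∀ θ y : ℝ, g θ y = τ θ * y / Real.sin θ + τbd * (1 / 2 - y / Real.tan θ)) :
    ∀ θ₁ ∈ Set.Ioo (0 : ℝ) (π / 2), ∀ θ₂ ∈ Set.Ioo (0 : ℝ) (π / 2),
      g θ₁ a + g θ₂ b ≥ g θY a + g θY b ∧
        (g θ₁ a + g θ₂ b = g θY a + g θY b ↔ θ₁ = θY ∧ θ₂ = θY) :=
  herring_young_sum_minimum_general τ τ' τ'' τbd hd1 hd2 θY hθY hHY hstiff a b ha hb g hg
end
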